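/- The domain-wall tensor A_0 = |0⟩(⟨0|+⟨1|), A_1 = |1⟩⟨1| is left 2-stable with Y_0 = A_0(1 − A_1), Y_1 = A_1, and Z = A_0 Y_0 + A_1 Y_1 = 1; consequently it satisfies the intersection property (S_k ⊗ ℂ²) ∩ (ℂ² ⊗ S_k) = S_{k+1} for all k ≥ 3. -/

import Mathlib

/-!
For `v` in `(S_{n+1} ⊗ ℂ^d) ∩ (ℂ^d ⊗ S_{n+1})` write `v (t j) = tr (X_j P(t))` and
`v (i t) = tr (W_i P(t))`, where `P(t)` is the product of the tensors along the word `t`. Reading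
`v (i u l)` both ways gives `tr (W_i M A_l) = tr (X_l A_i M)` for `M ∈ V_n`. Left stability puts
`Y_i A_j P(u)` in `V_n` and makes `Z = ∑ A_i Y_i` fix `A_j P(u)`, so
`tr ((∑ W_i Y_i) A_j P(u) A_l) = tr (X_l Z A_j P(u)) = v (j u l)`: the matrix `∑ W_i Y_i`
represents `v`, i.e. `v ∈ S_{n+2}`.

For the domain-wall tensor `A₀² = A₀`, `A₁² = A₁` and `A₁A₀ = 0`, so every `V_j` with `j ≥ 2`
is `span {A₀, A₁, A₀A₁}`; `Y_i` maps this space into itself, so the tensor is left `n`-stable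
for every `n ≥ 2`.
-/

open scoped BigOperators

noncomputable section

def prodA {d D : ℕ} (A : Fin d → Matrix (Fin D) (Fin D) ℂ) {k : ℕ} (s : Fin k → Fin d) :
    Matrix (Fin D) (Fin D) ℂ :=
  (List.ofFn fun t => A (s t)).prod

def mpsVec {d D : ℕ} (A : Fin d → Matrix (Fin D) (Fin D) ℂ) (X : Matrix (Fin D) (Fin D) ℂ)
    (k : ℕ) : (Fin k → Fin d) → ℂ :=
  fun s => (X * prodA A s).trace

def mpsSpace {d D : ℕ} (A : Fin d → Matrix (Fin D) (Fin D) ℂ) (k : ℕ) :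
    Submodule ℂ ((Fin k → Fin d) → ℂ) :=
  Submodule.span ℂ (Set.range fun X => mpsVec A X k)

/-- S ⊗ T inside H^{⊗(k+1)}, where S lives on the first k sites and T on the last site. -/
def tensSnoc {d k : ℕ} (S : Submodule ℂ ((Fin k → Fin d) → ℂ))
    (T : Submodule ℂ ((Fin 1 → Fin d) → ℂ)) :
    Submodule ℂ ((Fin (k + 1) → Fin d) → ℂ) :=
  Submodule.span ℂ
    {v | ∃ f ∈ S, ∃ g ∈ T,
      v = fun s => f (fun t => s (Fin.castSucc t)) * g (fun _ => s (Fin.last k))}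

/-- T ⊗ S inside H^{⊗(k+1)}, where T lives on the first site and S on the last k sites. -/
def tensCons {d k : ℕ} (T : Submodule ℂ ((Fin 1 → Fin d) → ℂ))
    (S : Submodule ℂ ((Fin k → Fin d) → ℂ)) :
    Submodule ℂ ((Fin (k + 1) → Fin d) → ℂ) :=
  Submodule.span ℂ
    {v | ∃ f ∈ S, ∃ g ∈ T,
      v = fun s => g (fun _ => s 0) * f (fun t => s t.succ)}

/-- The virtual MPS subspace V_j(A) ⊆ M_D. -/
def virtSpace {d D : ℕ} (A : Fin d → Matrix (Fin D) (Fin D) ℂ) (j : ℕ) :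
    Submodule ℂ (Matrix (Fin D) (Fin D) ℂ) :=
  Submodule.span ℂ (Set.range fun s : Fin j → Fin d => prodA A s)

open Matrix

section General

variable {d D : ℕ} (A : Fin d → Matrix (Fin D) (Fin D) ℂ)

theorem prodA_cons {k : ℕ} (i : Fin d) (s : Fin k → Fin d) :
    prodA A (Fin.cons i s) = A i * prodA A s := by
  simp [prodA, List.ofFn_succ]

theorem prodA_snoc {k : ℕ} (s : Fin k → Fin d) (j : Fin d) :
    prodA A (Fin.snoc s j) = prodA A s * A j := by
  rw [prodA, prodA, List.ofFn_succ', List.prod_concat]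
  simp

theorem prodA_mem_virtSpace {k : ℕ} (s : Fin k → Fin d) : prodA A s ∈ virtSpace A k :=
  Submodule.subset_span ⟨s, rfl⟩

theorem mul_mem_virtSpace_succ {k : ℕ} (i : Fin d) {M : Matrix (Fin D) (Fin D) ℂ}
    (hM : M ∈ virtSpace A k) : A i * M ∈ virtSpace A (k + 1) := by
  have : virtSpace A k ≤ (virtSpace A (k + 1)).comap (LinearMap.mulLeft ℂ (A i)) := by
    rw [virtSpace, Submodule.span_le]
    rintro _ ⟨s, rfl⟩
    simpa [← prodA_cons] using prodA_mem_virtSpace A (Fin.cons i s)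
  exact this hM

theorem virtSpace_succ_le {k : ℕ} {U : Submodule ℂ (Matrix (Fin D) (Fin D) ℂ)}
    (hU : ∀ i, ∀ M ∈ U, A i * M ∈ U) (hk : virtSpace A k ≤ U) : virtSpace A (k + 1) ≤ U := by
  rw [virtSpace, Submodule.span_le]
  rintro _ ⟨s, rfl⟩
  show prodA A s ∈ U
  rw [← Fin.cons_self_tail s, prodA_cons]
  exact hU _ _ (hk (prodA_mem_virtSpace A _))

def mpsMap (k : ℕ) : Matrix (Fin D) (Fin D) ℂ →ₗ[ℂ] (Fin k → Fin d) → ℂ where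
  toFun X := mpsVec A X k
  map_add' X X' := by ext s; simp [mpsVec, Matrix.add_mul]
  map_smul' c X := by ext s; simp [mpsVec]

end General

section Tensor

variable {d k : ℕ}

theorem mem_tensSnoc_top_iff {S : Submodule ℂ ((Fin k → Fin d) → ℂ)}
    {v : (Fin (k + 1) → Fin d) → ℂ} :
    v ∈ tensSnoc S ⊤ ↔ ∀ j, (fun t => v (Fin.snoc t j)) ∈ S := by
  constructor
  · intro hv
    induction hv using Submodule.span_induction with
    | mem v hv =>
      obtain ⟨f, hf, g, -, rfl⟩ := hv
      intro j
      convert S.smul_mem (g fun _ => j) hf using 1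
      ext t
      simp [mul_comm]
    | zero => exact fun _ => S.zero_mem
    | add v w _ _ hv hw => exact fun j => S.add_mem (hv j) (hw j)
    | smul c v _ hv => exact fun j => S.smul_mem c (hv j)
  · intro hv
    have hsum : v = ∑ j, fun s => v (Fin.snoc (fun t => s (Fin.castSucc t)) j) *
        if s (Fin.last k) = j then 1 else 0 := by
      ext s
      simp only [Finset.sum_apply, mul_ite, mul_one, mul_zero, Finset.sum_ite_eq,
        Finset.mem_univ, if_true]
      exact (congrArg v (Fin.snoc_init_self s)).symm
    rw [hsum]
    exact Submodule.sum_mem _ fun j _ => Submodule.subset_span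
      ⟨_, hv j, fun x => if x 0 = j then 1 else 0, Submodule.mem_top, rfl⟩

theorem mem_tensCons_top_iff {S : Submodule ℂ ((Fin k → Fin d) → ℂ)}
    {v : (Fin (k + 1) → Fin d) → ℂ} :
    v ∈ tensCons ⊤ S ↔ ∀ i, (fun t => v (Fin.cons i t)) ∈ S := by
  constructor
  · intro hv
    induction hv using Submodule.span_induction with
    | mem v hv =>
      obtain ⟨f, hf, g, -, rfl⟩ := hv
      intro i
      convert S.smul_mem (g fun _ => i) hf using 1
      ext t
      simp
    | zero => exact fun _ => S.zero_mem
    | add v w _ _ hv hw => exact fun i => S.add_mem (hv i) (hw i)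
    | smul c v _ hv => exact fun i => S.smul_mem c (hv i)
  · intro hv
    have hsum :
        v = ∑ i, fun s => (if s 0 = i then 1 else 0) * v (Fin.cons i fun t => s t.succ) := by
      ext s
      simp only [Finset.sum_apply, ite_mul, one_mul, zero_mul, Finset.sum_ite_eq,
        Finset.mem_univ, if_true]
      exact (congrArg v (Fin.cons_self_tail s)).symm
    rw [hsum]
    exact Submodule.sum_mem _ fun i _ => Submodule.subset_span
      ⟨_, hv i, fun x => if x 0 = i then 1 else 0, Submodule.mem_top, rfl⟩

end Tensor

section LeftStable

variable {d D : ℕ} {A : Fin d → Matrix (Fin D) (Fin D) ℂ}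

theorem mem_mpsSpace_iff {k : ℕ} {v : (Fin k → Fin d) → ℂ} :
    v ∈ mpsSpace A k ↔ ∃ X, mpsVec A X k = v := by
  have : mpsSpace A k = LinearMap.range (mpsMap A k) := by
    rw [mpsSpace, ← Submodule.span_eq (LinearMap.range (mpsMap A k)), LinearMap.coe_range]
    rfl
  rw [this, LinearMap.mem_range]
  rfl

theorem mpsSpace_succ_le_tensSnoc (k : ℕ) : mpsSpace A (k + 1) ≤ tensSnoc (mpsSpace A k) ⊤ := by
  intro v hv
  obtain ⟨X, rfl⟩ := mem_mpsSpace_iff.1 hv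
  refine mem_tensSnoc_top_iff.2 fun j => mem_mpsSpace_iff.2 ⟨A j * X, ?_⟩
  ext t
  simp only [mpsVec, prodA_snoc, ← Matrix.mul_assoc]
  exact (Matrix.trace_mul_cycle X (prodA A t) (A j)).symm

theorem mpsSpace_succ_le_tensCons (k : ℕ) : mpsSpace A (k + 1) ≤ tensCons ⊤ (mpsSpace A k) := by
  intro v hv
  obtain ⟨X, rfl⟩ := mem_mpsSpace_iff.1 hv
  refine mem_tensCons_top_iff.2 fun i => mem_mpsSpace_iff.2 ⟨X * A i, ?_⟩
  ext t
  simp only [mpsVec, prodA_cons, Matrix.mul_assoc]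

structure IsLeftStable (A Y : Fin d → Matrix (Fin D) (Fin D) ℂ) (n : ℕ) : Prop where
  mul_mem : ∀ i, ∀ M ∈ virtSpace A (n + 1), Y i * M ∈ virtSpace A n
  sum_mul : ∀ M ∈ virtSpace A (n + 1), (∑ i, A i * Y i) * M = M

theorem trace_mul_mul_eq_of_snoc_of_cons {n : ℕ} {v : (Fin (n + 2) → Fin d) → ℂ}
    {X W : Fin d → Matrix (Fin D) (Fin D) ℂ}
    (hX : ∀ j, mpsVec A (X j) (n + 1) = fun t => v (Fin.snoc t j))
    (hW : ∀ i, mpsVec A (W i) (n + 1) = fun t => v (Fin.cons i t))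
    (i l : Fin d) {M : Matrix (Fin D) (Fin D) ℂ} (hM : M ∈ virtSpace A n) :
    trace (W i * M * A l) = trace (X l * A i * M) := by
  induction hM using Submodule.span_induction with
  | mem M hM =>
    obtain ⟨u, rfl⟩ := hM
    calc trace (W i * prodA A u * A l) = v (Fin.cons i (Fin.snoc u l)) := by
          rw [← congrFun (hW i), mpsVec, prodA_snoc, Matrix.mul_assoc]
      _ = trace (X l * A i * prodA A u) := by
          rw [Fin.cons_snoc_eq_snoc_cons, ← congrFun (hX l), mpsVec, prodA_cons, Matrix.mul_assoc]
  | zero => simp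
  | add M M' _ _ hM hM' => simp [Matrix.mul_add, Matrix.add_mul, hM, hM']
  | smul c M _ hM => simp [hM]

theorem IsLeftStable.tensSnoc_inf_tensCons {Y : Fin d → Matrix (Fin D) (Fin D) ℂ} {n : ℕ}
    (h : IsLeftStable A Y n) :
    tensSnoc (mpsSpace A (n + 1)) ⊤ ⊓ tensCons ⊤ (mpsSpace A (n + 1)) = mpsSpace A (n + 2) := by
  refine le_antisymm ?_ (le_inf (mpsSpace_succ_le_tensSnoc _) (mpsSpace_succ_le_tensCons _))
  rintro v ⟨hsnoc, hcons⟩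
  choose X hX using fun j => mem_mpsSpace_iff.1 (mem_tensSnoc_top_iff.1 hsnoc j)
  choose W hW using fun i => mem_mpsSpace_iff.1 (mem_tensCons_top_iff.1 hcons i)
  refine mem_mpsSpace_iff.2 ⟨∑ i, W i * Y i, funext fun s => ?_⟩
  refine Fin.consCases (fun j t => Fin.snocCases (fun u l => ?_) t) s
  have hAu : A j * prodA A u ∈ virtSpace A (n + 1) :=
    mul_mem_virtSpace_succ A j (prodA_mem_virtSpace A u)
  calc mpsVec A (∑ i, W i * Y i) (n + 2) (Fin.cons j (Fin.snoc u l))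
      = ∑ i, trace (W i * (Y i * (A j * prodA A u)) * A l) := by
        simp [mpsVec, prodA_cons, prodA_snoc, Finset.sum_mul, Matrix.mul_assoc]
    _ = ∑ i, trace (X l * A i * (Y i * (A j * prodA A u))) := Finset.sum_congr rfl fun i _ =>
        trace_mul_mul_eq_of_snoc_of_cons hX hW i l (h.mul_mem i _ hAu)
    _ = trace (X l * ((∑ i, A i * Y i) * (A j * prodA A u))) := by
        simp [Finset.mul_sum, Finset.sum_mul, Matrix.mul_assoc]
    _ = v (Fin.cons j (Fin.snoc u l)) := by
        rw [h.sum_mul _ hAu, Fin.cons_snoc_eq_snoc_cons, ← congrFun (hX l), mpsVec, prodA_cons]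

end LeftStable

def domainWall : Fin 2 → Matrix (Fin 2) (Fin 2) ℂ := ![!![1, 1; 0, 0], !![0, 0; 0, 1]]

def domainWallY : Fin 2 → Matrix (Fin 2) (Fin 2) ℂ :=
  ![domainWall 0 * (1 - domainWall 1), domainWall 1]

def wallSpan : Submodule ℂ (Matrix (Fin 2) (Fin 2) ℂ) :=
  Submodule.span ℂ {domainWall 0, domainWall 1, domainWall 0 * domainWall 1}

theorem domainWall_mul_self (i : Fin 2) : domainWall i * domainWall i = domainWall i := by
  ext a b; fin_cases i <;> fin_cases a <;> fin_cases b <;> simp [domainWall, Matrix.mul_apply]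

theorem domainWall_one_mul_domainWall_zero : domainWall 1 * domainWall 0 = 0 := by
  ext a b; fin_cases a <;> fin_cases b <;> simp [domainWall, Matrix.mul_apply]

theorem sum_domainWall_mul_domainWallY : ∑ i, domainWall i * domainWallY i = 1 := by
  ext a b
  fin_cases a <;> fin_cases b <;>
    simp [domainWall, domainWallY, Matrix.vecMul, dotProduct, Fin.sum_univ_two, Matrix.one_apply]

theorem domainWall_mem_wallSpan (i : Fin 2) : domainWall i ∈ wallSpan := by
  fin_cases i <;> exact Submodule.subset_span (by simp)

theorem mul_mem_wallSpan (i : Fin 2) {M : Matrix (Fin 2) (Fin 2) ℂ} (hM : M ∈ wallSpan) :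
    domainWall i * M ∈ wallSpan := by
  have hE : domainWall 0 * domainWall 1 ∈ wallSpan := Submodule.subset_span (by simp)
  have : wallSpan ≤ wallSpan.comap (LinearMap.mulLeft ℂ (domainWall i)) := Submodule.span_le.2 <| by
    fin_cases i <;> simp [Set.insert_subset_iff, ← Matrix.mul_assoc, domainWall_mul_self,
      domainWall_one_mul_domainWall_zero, domainWall_mem_wallSpan, hE]
  exact this hM

theorem virtSpace_domainWall_le {j : ℕ} (hj : 1 ≤ j) : virtSpace domainWall j ≤ wallSpan := by
  induction j, hj using Nat.le_induction with
  | base =>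
    rw [virtSpace, Submodule.span_le]
    rintro _ ⟨s, rfl⟩
    simpa [prodA] using domainWall_mem_wallSpan (s 0)
  | succ j _ ih => exact virtSpace_succ_le domainWall (fun i _ => mul_mem_wallSpan i) ih

theorem wallSpan_le_virtSpace {j : ℕ} (hj : 2 ≤ j) : wallSpan ≤ virtSpace domainWall j := by
  induction j, hj using Nat.le_induction with
  | base =>
    have h : ∀ a b, domainWall a * domainWall b ∈ virtSpace domainWall 2 := fun a b => by
      simpa [prodA] using prodA_mem_virtSpace domainWall ![a, b]
    refine Submodule.span_le.2 ?_
    simp only [Set.insert_subset_iff, Set.singleton_subset_iff, SetLike.mem_coe]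
    exact ⟨domainWall_mul_self 0 ▸ h 0 0, domainWall_mul_self 1 ▸ h 1 1, h 0 1⟩
  | succ j _ ih =>
    have h : ∀ i, ∀ M ∈ wallSpan, domainWall i * M ∈ virtSpace domainWall (j + 1) :=
      fun i M hM => mul_mem_virtSpace_succ domainWall i (ih hM)
    refine Submodule.span_le.2 ?_
    simp only [Set.insert_subset_iff, Set.singleton_subset_iff, SetLike.mem_coe]
    refine ⟨?_, ?_, ?_⟩
    · simpa [domainWall_mul_self] using h 0 _ (domainWall_mem_wallSpan 0)
    · simpa [domainWall_mul_self] using h 1 _ (domainWall_mem_wallSpan 1)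
    · simpa [← Matrix.mul_assoc, domainWall_mul_self] using
        h 0 _ (mul_mem_wallSpan 0 (domainWall_mem_wallSpan 1))

theorem virtSpace_domainWall {j : ℕ} (hj : 2 ≤ j) : virtSpace domainWall j = wallSpan :=
  le_antisymm (virtSpace_domainWall_le (by omega)) (wallSpan_le_virtSpace hj)

theorem domainWallY_mul_mem_wallSpan (i : Fin 2) {M : Matrix (Fin 2) (Fin 2) ℂ}
    (hM : M ∈ wallSpan) : domainWallY i * M ∈ wallSpan := by
  fin_cases i
  · have : domainWallY 0 * M = domainWall 0 * M - domainWall 0 * (domainWall 1 * M) := by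
      simp [domainWallY, Matrix.mul_sub, Matrix.sub_mul, Matrix.mul_assoc]
    show domainWallY 0 * M ∈ wallSpan
    rw [this]
    exact sub_mem (mul_mem_wallSpan 0 hM) (mul_mem_wallSpan 0 (mul_mem_wallSpan 1 hM))
  · exact mul_mem_wallSpan 1 hM

theorem isLeftStable_domainWall {n : ℕ} (hn : 2 ≤ n) : IsLeftStable domainWall domainWallY n where
  mul_mem i M hM := by
    rw [virtSpace_domainWall (by omega)] at hM
    rw [virtSpace_domainWall hn]
    exact domainWallY_mul_mem_wallSpan i hM
  sum_mul M _ := by rw [sum_domainWall_mul_domainWallY, Matrix.one_mul]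

/-- the domain-wall tensor is left 2-stable with Y₀ = A₀(1 − A₁), Y₁ = A₁ and
Z = A₀Y₀ + A₁Y₁ = 1; consequently (S_k ⊗ ℂ²) ∩ (ℂ² ⊗ S_k) = S_{k+1} for all k ≥ 3. -/
theorem domainWall_stable_and_intersection (A : Fin 2 → Matrix (Fin 2) (Fin 2) ℂ)
    (hA0 : A 0 = !![1, 1; 0, 0]) (hA1 : A 1 = !![0, 0; 0, 1])
    (Y : Fin 2 → Matrix (Fin 2) (Fin 2) ℂ)
    (hY0 : Y 0 = A 0 * (1 - A 1)) (hY1 : Y 1 = A 1) :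
    ((∀ i, ∀ M ∈ virtSpace A 3, Y i * M ∈ virtSpace A 2) ∧
      (∑ i, A i * Y i) = 1) ∧
    ∀ k, 3 ≤ k →
      tensSnoc (mpsSpace A k) ⊤ ⊓ tensCons ⊤ (mpsSpace A k) = mpsSpace A (k + 1) := by
  obtain rfl : A = domainWall := funext fun i => by fin_cases i <;> assumption
  obtain rfl : Y = domainWallY := funext fun i => by fin_cases i <;> assumption
  refine ⟨⟨(isLeftStable_domainWall le_rfl).mul_mem, sum_domainWall_mul_domainWallY⟩, ?_⟩
  intro k hk
  obtain ⟨n, rfl⟩ : ∃ n, k = n + 1 := ⟨k - 1, by omega⟩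
  exact (isLeftStable_domainWall (by omega)).tensSnoc_inf_tensCons
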